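/- (Proposition, part (ii)) Assume p_M > 0 for all M ∈ D_I. If a ∈ A(I) satisfies B_φ(a, b) = φ(ab) = 0 for all b ∈ A(ι(I)), then a = 0. -/

import Mathlib

noncomputable section
open scoped InnerProductSpace ComplexConjugate
open ContinuousLinearMap

namespace Fermion

variable (L : Type) [Fintype L] [LinearOrder L]

/-- The fermionic Fock space over the one-particle space `h = ℓ²(L)`, realized concretely
via its orthonormal basis indexed by the finite subsets of `L` (the vectors `f_M`). -/
abbrev FockSpace := EuclideanSpace ℂ (Finset L)

variable {L}

/-- The vacuum vector `Ψ = f_∅`. -/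
def vac : FockSpace L := EuclideanSpace.single ∅ 1

/-- Jordan–Wigner sign factor. -/
def jwSign (l : L) (S : Finset L) : ℂ := (-1 : ℂ) ^ (S.filter (fun k => k < l)).card

/-- The creation operator `a*_l = a*(e_l)`. -/
def cre (l : L) : FockSpace L →L[ℂ] FockSpace L :=
  LinearMap.toContinuousLinearMap <|
    (EuclideanSpace.basisFun (Finset L) ℂ).toBasis.constr ℂ fun S =>
      if l ∈ S then 0 else jwSign l S • EuclideanSpace.single (insert l S) 1

/-- The annihilation operator `a_l = a(e_l)`. -/
def ann (l : L) : FockSpace L →L[ℂ] FockSpace L := ContinuousLinearMap.adjoint (cre l)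

/-- The vector `f_{(l_1,…,l_n)} = a*_{l_1} ⋯ a*_{l_n} Ψ  (= P (e_{l_1} ⊗ ⋯ ⊗ e_{l_n}))`. -/
def fvec (M : List L) : FockSpace L := M.foldr (fun l v => cre l v) vac

/-- The algebra `A(I)` : the unital *-subalgebra of `B(H)` generated by `{a_l : l ∈ I}`. -/
def A (I : Finset L) : StarSubalgebra ℂ (FockSpace L →L[ℂ] FockSpace L) :=
  StarAlgebra.adjoin ℂ (ann '' (I : Set L))

/-- The trace on `B(H)`. -/
def Tr (T : FockSpace L →L[ℂ] FockSpace L) : ℂ := LinearMap.trace ℂ (FockSpace L) T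

/-- The rank-one operator `|x⟩⟨y|`. -/
def ketbra (x y : FockSpace L) : FockSpace L →L[ℂ] FockSpace L :=
  (ContinuousLinearMap.toSpanSingleton ℂ x).comp (innerSL ℂ y)

/-- A valid choice of `D_I`: `D S` enumerates the finite set `S` without repetitions. -/
def IsEnum (D : Finset L → List L) : Prop := ∀ S : Finset L, (D S).Nodup ∧ (D S).toFinset = S

/-- The entangled vector `Φ = Σ_{M ∈ D_I} p_M^{1/2} f_{M ι(M)}`. -/
def Phi (D : Finset L → List L) (p : Finset L → ℝ) (I : Finset L) (ι : L → L) : FockSpace L :=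
  ∑ S ∈ I.powerset, (Real.sqrt (p S) : ℂ) • fvec (D S ++ (D S).map ι)

/-- The state `φ(x) = ⟨Φ, xΦ⟩`. -/
def phi (D : Finset L → List L) (p : Finset L → ℝ) (I : Finset L) (ι : L → L)
    (x : FockSpace L →L[ℂ] FockSpace L) : ℂ :=
  ⟪Phi D p I ι, x (Phi D p I ι)⟫_ℂ

/-!
Let `g = a†` and write `Φ = ∑_{S ⊆ I} w_S f_{S ∪ ι S}` with every `w_S ≠ 0`. An operator in
`A(I)` acts only on the modes of `I`: its matrix in the occupation-number basis preserves the
occupation outside `I` and, up to a Jordan–Wigner sign, depends only on the occupation inside `I`.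
For `N, M ⊆ I`, the word `b = a*_T · ∏_{j ∈ ι I} a_j a*_j · a_{ι N}` with `T = ι M` lies in
`A(ι I)` and maps `Φ` to a nonzero multiple of `f_{N ∪ ι M}`, so `0 = φ(ab) = ⟨gΦ, bΦ⟩` kills the
`N ∪ ι M` coefficient of `gΦ`. By locality that coefficient is `± w_M ⟨f_N, g f_M⟩`, so the
`I`-block of `g` vanishes, and locality again gives `g = 0`.
-/

end Fermion

namespace Finset

variable {α : Type*} [DecidableEq α]

lemma union_sdiff_eq_right_of_subset {I N T : Finset α} (hN : N ⊆ I) (hT : Disjoint T I) :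
    (N ∪ T) \ I = T := by
  rw [union_sdiff_distrib, sdiff_eq_empty_iff_subset.mpr hN, sdiff_eq_self_of_disjoint hT,
    empty_union]

lemma union_inter_eq_left_of_subset {I N T : Finset α} (hN : N ⊆ I) (hT : Disjoint T I) :
    (N ∪ T) ∩ I = N := by
  rw [union_inter_distrib_right, inter_eq_left.mpr hN, disjoint_iff_inter_eq_empty.mp hT,
    union_empty]

lemma sum_ite_sdiff_eq_sum_powerset {M : Type*} [Fintype α] [AddCommMonoid M]
    {I T : Finset α} (hT : Disjoint T I) (F : Finset α → M) :
    ∑ R, (if R \ I = T then F (R ∩ I) else 0) = ∑ N ∈ I.powerset, F N := by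
  rw [← sum_filter]
  refine sum_nbij' (· ∩ I) (· ∪ T) (by simp) ?_ ?_ ?_ (fun _ _ => rfl)
  · intro N hN
    simpa using union_sdiff_eq_right_of_subset (mem_powerset.mp hN) hT
  · intro R hR
    simp only [mem_filter, mem_univ, true_and] at hR
    simpa [← hR] using sup_inf_sdiff R I
  · intro N hN
    exact union_inter_eq_left_of_subset (mem_powerset.mp hN) hT

lemma subset_of_image_subset_union_image {I : Finset α} {f : α → α} (hf : Set.InjOn f I)
    (hI : Disjoint I (I.image f)) {S N : Finset α} (hS : S ⊆ I) (hN : N ⊆ I)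
    (h : N.image f ⊆ S ∪ S.image f) : N ⊆ S := by
  have hNS : N.image f ⊆ S.image f :=
    (hI.mono hS (image_subset_image hN)).symm.left_le_of_le_sup_left h
  rwa [← coe_subset, coe_image, coe_image,
    hf.image_subset_image_iff (coe_subset.mpr hN) (coe_subset.mpr hS), coe_subset] at hNS

end Finset

namespace Fermion

open Matrix

variable {L : Type} [LinearOrder L]

lemma jwSign_mul_self (l : L) (S : Finset L) : jwSign l S * jwSign l S = 1 := by
  simp [jwSign, ← pow_add, ← two_mul, pow_mul]

lemma jwSign_ne_zero (l : L) (S : Finset L) : jwSign l S ≠ 0 :=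
  left_ne_zero_of_mul_eq_one (jwSign_mul_self l S)

lemma conj_jwSign (l : L) (S : Finset L) : conj (jwSign l S) = jwSign l S := by
  simp [jwSign]

lemma jwSign_union (l : L) {S T : Finset L} (h : Disjoint S T) :
    jwSign l (S ∪ T) = jwSign l S * jwSign l T := by
  rw [jwSign, jwSign, jwSign, Finset.filter_union,
    Finset.card_union_of_disjoint (Finset.disjoint_filter_filter h), pow_add]

lemma jwSign_eq_inter_mul_sdiff (l : L) (I S : Finset L) :
    jwSign l S = jwSign l (S ∩ I) * jwSign l (S \ I) := by
  conv_lhs => rw [← Finset.sdiff_union_inter S I]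
  rw [jwSign_union l (Finset.disjoint_sdiff_inter S I), mul_comm]

/-- The Jordan–Wigner sign picked up when the modes of `S ∩ I` are moved past those of `S \ I`. -/
def outerSign (I S : Finset L) : ℂ := ∏ m ∈ S ∩ I, jwSign m (S \ I)

lemma outerSign_mul_self (I S : Finset L) : outerSign I S * outerSign I S = 1 := by
  rw [outerSign, ← Finset.prod_mul_distrib]
  exact Finset.prod_eq_one fun m _ => jwSign_mul_self m _

lemma outerSign_ne_zero (I S : Finset L) : outerSign I S ≠ 0 :=
  left_ne_zero_of_mul_eq_one (outerSign_mul_self I S)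

lemma conj_outerSign (I S : Finset L) : conj (outerSign I S) = outerSign I S := by
  rw [outerSign, map_prod]
  exact Finset.prod_congr rfl fun m _ => conj_jwSign m _

lemma outerSign_inter (I S : Finset L) : outerSign I (S ∩ I) = 1 := by
  simp [outerSign, jwSign, Finset.sdiff_eq_empty_iff_subset.mpr Finset.inter_subset_right]

lemma outerSign_insert {I S : Finset L} {l : L} (hlI : l ∈ I) (hlS : l ∉ S) :
    outerSign I (insert l S) = jwSign l (S \ I) * outerSign I S := by
  rw [outerSign, outerSign, Finset.insert_inter_of_mem hlI, Finset.insert_sdiff_of_mem _ hlI,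
    Finset.prod_insert fun h => hlS (Finset.mem_of_mem_inter_left h)]

/-- The matrix of an operator acting only on the modes in `I`: it preserves the occupation outside
`I` and, up to the sign `outerSign`, does not depend on it. -/
def IsLocalMatrix (I : Finset L) (m : Matrix (Finset L) (Finset L) ℂ) : Prop :=
  ∀ S' S, m S' S =
    if S' \ I = S \ I then outerSign I S' * outerSign I S * m (S' ∩ I) (S ∩ I) else 0

lemma IsLocalMatrix.eq_zero {I : Finset L} {m : Matrix (Finset L) (Finset L) ℂ}
    (hm : IsLocalMatrix I m) (h : ∀ N ⊆ I, ∀ M ⊆ I, m N M = 0) : m = 0 := by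
  ext S' S
  rw [hm, h _ Finset.inter_subset_right _ Finset.inter_subset_right]
  simp

variable [Fintype L]

lemma IsLocalMatrix.mul_apply {I : Finset L} {x y : Matrix (Finset L) (Finset L) ℂ}
    (hx : IsLocalMatrix I x) (hy : IsLocalMatrix I y) (S' S : Finset L) :
    (x * y) S' S = if S' \ I = S \ I then
      outerSign I S' * outerSign I S * ∑ N ∈ I.powerset, x (S' ∩ I) N * y N (S ∩ I) else 0 := by
  have hterm : ∀ R, x S' R * y R S = if S' \ I = S \ I then outerSign I S' * outerSign I S *
      (if R \ I = S \ I then x (S' ∩ I) (R ∩ I) * y (R ∩ I) (S ∩ I) else 0) else 0 := by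
    intro R
    rw [hx, hy]
    have := outerSign_mul_self I R
    split_ifs <;> first | linear_combination (x (S' ∩ I) (R ∩ I) * y (R ∩ I) (S ∩ I) *
      outerSign I S' * outerSign I S) * this | simp_all
  rw [Matrix.mul_apply, Finset.sum_congr rfl fun R _ => hterm R]
  split_ifs
  · rw [← Finset.mul_sum, Finset.sum_ite_sdiff_eq_sum_powerset Finset.sdiff_disjoint
      (fun N => x (S' ∩ I) N * y N (S ∩ I))]
  · simp

def localMatrices (I : Finset L) : StarSubalgebra ℂ (Matrix (Finset L) (Finset L) ℂ) where
  carrier := {m | IsLocalMatrix I m}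
  mul_mem' {x y} hx hy S' S := by
    simp [hx.mul_apply hy, Finset.inter_assoc, outerSign_inter,
      Finset.sdiff_eq_empty_iff_subset.mpr Finset.inter_subset_right]
  add_mem' {x y} hx hy S' S := by
    rw [Matrix.add_apply, Matrix.add_apply, hx, hy]
    split_ifs <;> ring
  algebraMap_mem' r S' S := by
    simp only [algebraMap_matrix_apply, Algebra.algebraMap_self, RingHom.id_apply]
    by_cases h : S' = S
    · simp [h, outerSign_mul_self]
    · have : ¬ (S' \ I = S \ I ∧ S' ∩ I = S ∩ I) := fun ⟨h₁, h₂⟩ =>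
        h (by rw [← sup_inf_sdiff S' I, ← sup_inf_sdiff S I]; exact congrArg₂ _ h₂ h₁)
      simp_all
  star_mem' {x} hx S' S := by
    rw [star_apply, star_apply, hx S S']
    by_cases h : S' \ I = S \ I
    · simp [h, conj_outerSign, mul_comm (outerSign I S)]
    · simp [h, Ne.symm h]

abbrev opMatrix : (FockSpace L →L[ℂ] FockSpace L) ≃⋆ₐ[ℂ] Matrix (Finset L) (Finset L) ℂ :=
  toEuclideanCLM.symm

lemma opMatrix_apply (a : FockSpace L →L[ℂ] FockSpace L) (S' S : Finset L) :
    opMatrix a S' S = a (EuclideanSpace.single S 1) S' := by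
  obtain ⟨m, rfl⟩ : ∃ m, opMatrix.symm m = a := ⟨_, opMatrix.symm_apply_apply a⟩
  rw [StarAlgEquiv.apply_symm_apply]
  change m S' S = (m *ᵥ (EuclideanSpace.single S 1).ofLp) S'
  simp

lemma cre_single (l : L) (S : Finset L) :
    cre l (EuclideanSpace.single S 1) =
      if l ∈ S then 0 else jwSign l S • EuclideanSpace.single (insert l S) 1 := by
  have h := (EuclideanSpace.basisFun (Finset L) ℂ).toBasis.constr_basis ℂ
    (fun S => if l ∈ S then 0 else jwSign l S • EuclideanSpace.single (insert l S) (1 : ℂ)) S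
  rwa [OrthonormalBasis.coe_toBasis, EuclideanSpace.basisFun_apply] at h

lemma opMatrix_cre (l : L) (S' S : Finset L) :
    opMatrix (cre l) S' S = if l ∉ S ∧ S' = insert l S then jwSign l S else 0 := by
  rw [opMatrix_apply, cre_single]
  by_cases hl : l ∈ S <;> simp [hl]

lemma opMatrix_ann (l : L) (S' S : Finset L) :
    opMatrix (ann l) S' S = if l ∉ S' ∧ S = insert l S' then jwSign l S' else 0 := by
  rw [ann, ← star_eq_adjoint, StarRingEquivClass.map_star, star_apply, opMatrix_cre]
  split_ifs <;> simp [conj_jwSign]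

lemma ann_single_insert {l : L} {S : Finset L} (hl : l ∉ S) :
    ann l (EuclideanSpace.single (insert l S) 1) = jwSign l S • EuclideanSpace.single S 1 := by
  ext S'
  rw [← opMatrix_apply, opMatrix_ann]
  by_cases h : S' = S
  · simp [h, hl]
  · have : ¬ (l ∉ S' ∧ insert l S = insert l S') := fun ⟨hl', h'⟩ =>
      h (by rw [← Finset.erase_insert hl, h', Finset.erase_insert hl'])
    simp [h, this]

lemma ann_single_of_not_mem {l : L} {S : Finset L} (hl : l ∉ S) :
    ann l (EuclideanSpace.single S 1) = 0 := by
  ext S'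
  rw [← opMatrix_apply, opMatrix_ann]
  simp [show ¬ (S = insert l S') from fun h => hl (h ▸ Finset.mem_insert_self l S')]

lemma isLocalMatrix_opMatrix_ann {I : Finset L} {l : L} (hl : l ∈ I) :
    IsLocalMatrix I (opMatrix (ann l)) := by
  intro S' S
  rw [opMatrix_ann, opMatrix_ann]
  by_cases h : l ∉ S' ∧ S = insert l S'
  · obtain ⟨hlS', rfl⟩ := h
    have hlS'I : l ∉ S' ∩ I := fun h => hlS' (Finset.mem_of_mem_inter_left h)
    rw [if_pos ⟨hlS', rfl⟩, Finset.insert_sdiff_of_mem _ hl, if_pos rfl,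
      Finset.insert_inter_of_mem hl, if_pos ⟨hlS'I, rfl⟩, outerSign_insert hl hlS',
      jwSign_eq_inter_mul_sdiff l I S']
    linear_combination (jwSign l (S' ∩ I) * jwSign l (S' \ I)) * (outerSign_mul_self I S').symm
  · rw [if_neg h]
    split_ifs with hout hin
    · refine absurd ⟨fun hlS' => hin.1 (Finset.mem_inter.mpr ⟨hlS', hl⟩), ?_⟩ h
      rw [← Finset.sdiff_union_inter S I, ← Finset.sdiff_union_inter S' I, hout, hin.2,
        Finset.union_insert]
    · simp
    · rfl

lemma isLocalMatrix_opMatrix_of_mem_A {I : Finset L} {a : FockSpace L →L[ℂ] FockSpace L}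
    (ha : a ∈ A I) : IsLocalMatrix I (opMatrix a) := by
  suffices A I ≤ (localMatrices I).comap opMatrix.toStarAlgHom from this ha
  refine StarAlgebra.adjoin_le ?_
  rintro _ ⟨l, hl, rfl⟩
  exact isLocalMatrix_opMatrix_ann hl

def creProd (K : List L) : FockSpace L →L[ℂ] FockSpace L := (K.map cre).prod

def annProd (K : List L) : FockSpace L →L[ℂ] FockSpace L := (K.map ann).prod

/-- Each factor `a_j a*_j = 1 - n_j` projects onto the states with mode `j` empty. -/
def emptyProj (K : List L) : FockSpace L →L[ℂ] FockSpace L := (K.map fun j => ann j * cre j).prod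

lemma ann_mem_A {J : Finset L} {l : L} (hl : l ∈ J) : ann l ∈ A J :=
  StarAlgebra.subset_adjoin ℂ _ ⟨l, hl, rfl⟩

lemma cre_mem_A {J : Finset L} {l : L} (hl : l ∈ J) : cre l ∈ A J := by
  simpa [ann, star_eq_adjoint] using star_mem (ann_mem_A hl)

lemma creProd_mem_A {J : Finset L} {K : List L} (hK : ∀ l ∈ K, l ∈ J) : creProd K ∈ A J :=
  list_prod_mem <| by simpa using fun l hl => cre_mem_A (hK l hl)

lemma annProd_mem_A {J : Finset L} {K : List L} (hK : ∀ l ∈ K, l ∈ J) : annProd K ∈ A J :=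
  list_prod_mem <| by simpa using fun l hl => ann_mem_A (hK l hl)

lemma emptyProj_mem_A {J : Finset L} {K : List L} (hK : ∀ l ∈ K, l ∈ J) : emptyProj K ∈ A J :=
  list_prod_mem <| by simpa using fun l hl => mul_mem (ann_mem_A (hK l hl)) (cre_mem_A (hK l hl))

lemma creProd_single {K : List L} (hK : K.Nodup) {S : Finset L} (hKS : ∀ l ∈ K, l ∉ S) :
    ∃ c : ℂ, c ≠ 0 ∧ creProd K (EuclideanSpace.single S 1) =
      c • EuclideanSpace.single (S ∪ K.toFinset) 1 := by
  induction K with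
  | nil => exact ⟨1, one_ne_zero, by simp [creProd]⟩
  | cons k K ih =>
    obtain ⟨c, hc, hK'⟩ := ih hK.of_cons fun l hl => hKS l (List.mem_cons_of_mem k hl)
    have hk : k ∉ S ∪ K.toFinset := by
      simpa [hKS k List.mem_cons_self] using (List.nodup_cons.mp hK).1
    refine ⟨c * jwSign k (S ∪ K.toFinset), mul_ne_zero hc (jwSign_ne_zero _ _), ?_⟩
    rw [creProd, List.map_cons, List.prod_cons, mul_apply_eq_comp, ← creProd, hK', map_smul,
      cre_single, if_neg hk, smul_smul, List.toFinset_cons, Finset.union_insert]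

lemma annProd_single {K : List L} (hK : K.Nodup) (S : Finset L) :
    ∃ c : ℂ, c ≠ 0 ∧ annProd K (EuclideanSpace.single S 1) =
      if K.toFinset ⊆ S then c • EuclideanSpace.single (S \ K.toFinset) 1 else 0 := by
  induction K with
  | nil => exact ⟨1, one_ne_zero, by simp [annProd]⟩
  | cons k K ih =>
    obtain ⟨c, hc, hK'⟩ := ih hK.of_cons
    have hkK : k ∉ K.toFinset := by simpa using (List.nodup_cons.mp hK).1
    rw [annProd, List.map_cons, List.prod_cons, mul_apply_eq_comp, ← annProd, hK',
      List.toFinset_cons]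
    by_cases hKS : K.toFinset ⊆ S
    · by_cases hkS : k ∈ S
      · have hS : S \ K.toFinset = insert k (S \ insert k K.toFinset) := by
          rw [Finset.sdiff_insert, Finset.insert_erase (Finset.mem_sdiff.mpr ⟨hkS, hkK⟩)]
        refine ⟨c * jwSign k (S \ insert k K.toFinset), mul_ne_zero hc (jwSign_ne_zero _ _), ?_⟩
        rw [if_pos hKS, if_pos (Finset.insert_subset hkS hKS), map_smul, hS,
          ann_single_insert (by simp), smul_smul]
      · refine ⟨c, hc, ?_⟩
        rw [if_pos hKS, if_neg (fun h => hkS (Finset.insert_subset_iff.mp h).1), map_smul,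
          ann_single_of_not_mem (fun h => hkS (Finset.mem_sdiff.mp h).1), smul_zero]
    · refine ⟨c, hc, ?_⟩
      rw [if_neg hKS, if_neg (fun h => hKS (Finset.insert_subset_iff.mp h).2), map_zero]

lemma ann_cre_single (j : L) (S : Finset L) :
    ann j (cre j (EuclideanSpace.single S 1)) =
      if j ∈ S then 0 else EuclideanSpace.single S 1 := by
  rw [cre_single]
  split_ifs with hj
  · exact map_zero _
  · rw [map_smul, ann_single_insert hj, smul_smul, jwSign_mul_self, one_smul]

lemma emptyProj_single (K : List L) (S : Finset L) :
    emptyProj K (EuclideanSpace.single S 1) =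
      if ∀ j ∈ K, j ∉ S then EuclideanSpace.single S 1 else 0 := by
  induction K with
  | nil => simp [emptyProj]
  | cons k K ih =>
    rw [emptyProj, List.map_cons, List.prod_cons, mul_apply_eq_comp, ← emptyProj, ih]
    by_cases hK : ∀ j ∈ K, j ∉ S
    · rw [if_pos hK, mul_apply_eq_comp, ann_cre_single]
      by_cases hk : k ∈ S
      · rw [if_pos hk, if_neg fun h => h k List.mem_cons_self hk]
      · rw [if_neg hk, if_pos fun j hj => (List.mem_cons.mp hj).elim (· ▸ hk) (hK j)]
    · rw [if_neg hK, if_neg fun h => hK fun j hj => h j (List.mem_cons_of_mem k hj), map_zero]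

lemma fvec_eq_creProd (K : List L) : fvec K = creProd K vac := by
  induction K with
  | nil => rfl
  | cons k K ih =>
    rw [fvec, List.foldr_cons, ← fvec, ih]
    simp only [creProd, List.map_cons, List.prod_cons, mul_apply_eq_comp]

lemma fvec_eq_smul_single {K : List L} (hK : K.Nodup) :
    ∃ c : ℂ, c ≠ 0 ∧ fvec K = c • EuclideanSpace.single K.toFinset 1 := by
  obtain ⟨c, hc, h⟩ := creProd_single hK (S := ∅) (by simp)
  exact ⟨c, hc, by rw [fvec_eq_creProd, vac, h, Finset.empty_union]⟩

def pairedVector (I : Finset L) (ι : L → L) (w : Finset L → ℂ) : FockSpace L :=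
  ∑ S ∈ I.powerset, w S • EuclideanSpace.single (S ∪ S.image ι) 1

lemma Phi_eq_pairedVector {I : Finset L} {ι : L → L} (hinj : Set.InjOn ι I)
    (hIJ : Disjoint I (I.image ι)) {D : Finset L → List L} (hD : IsEnum D) {p : Finset L → ℝ}
    (hp : ∀ S ∈ I.powerset, 0 < p S) :
    ∃ w : Finset L → ℂ, (∀ S ∈ I.powerset, w S ≠ 0) ∧ Phi D p I ι = pairedVector I ι w := by
  have hf : ∀ S ∈ I.powerset, ∃ c : ℂ, c ≠ 0 ∧
      fvec (D S ++ (D S).map ι) = c • EuclideanSpace.single (S ∪ S.image ι) 1 := by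
    intro S hS
    obtain ⟨hnd, htf⟩ := hD S
    have hmem : ∀ x ∈ D S, x ∈ I := fun x hx =>
      Finset.mem_powerset.mp hS (htf ▸ List.mem_toFinset.mpr hx)
    have hK : (D S ++ (D S).map ι).Nodup := by
      refine hnd.append (hnd.map_on fun x hx y hy => hinj (hmem x hx) (hmem y hy)) ?_
      intro x hx hx'
      obtain ⟨y, hy, rfl⟩ := List.mem_map.mp hx'
      exact Finset.disjoint_left.mp hIJ (hmem _ hx) (Finset.mem_image_of_mem ι (hmem y hy))
    have hKS : (D S ++ (D S).map ι).toFinset = S ∪ S.image ι := by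
      conv_rhs => rw [← htf]
      ext; simp
    simpa [hKS] using fvec_eq_smul_single hK
  choose! c hc hfc using hf
  refine ⟨fun S => (Real.sqrt (p S) : ℂ) * c S, fun S hS => mul_ne_zero ?_ (hc S hS), ?_⟩
  · exact_mod_cast (Real.sqrt_pos.mpr (hp S hS)).ne'
  · exact Finset.sum_congr rfl fun S hS => by rw [hfc S hS, smul_smul]

/- `a_{ι N}` strips the partners `ι N` off `f_{N ∪ ι N}`; for `S ≠ N` some partner `ι s` with
`s ∈ S \ N` survives (or `a_{ι N}` already gives `0`), and the projection kills it. -/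
lemma emptyProj_mul_annProd_single {I : Finset L} {ι : L → L} (hinj : Set.InjOn ι I)
    (hIJ : Disjoint I (I.image ι)) {S N : Finset L} (hS : S ⊆ I) (hN : N ⊆ I) :
    ∃ c : ℂ, c ≠ 0 ∧ (emptyProj (I.image ι).toList * annProd (N.image ι).toList)
      (EuclideanSpace.single (S ∪ S.image ι) 1) =
        if S = N then c • EuclideanSpace.single N 1 else 0 := by
  obtain ⟨c, hc, hann⟩ := annProd_single (N.image ι).nodup_toList (S ∪ S.image ι)
  refine ⟨c, hc, ?_⟩
  rw [mul_apply_eq_comp, hann, Finset.toList_toFinset]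
  by_cases hSN : S = N
  · subst hSN
    have hvac : ∀ j ∈ (I.image ι).toList, j ∉ S := fun j hj hjS =>
      Finset.disjoint_left.mp hIJ (hS hjS) (Finset.mem_toList.mp hj)
    rw [if_pos Finset.subset_union_right, if_pos rfl, map_smul,
      Finset.union_sdiff_cancel_right (hIJ.mono hS (Finset.image_subset_image hS)),
      emptyProj_single, if_pos hvac]
  · rw [if_neg hSN]
    split_ifs with hsub
    · obtain ⟨s, hsS, hsN⟩ := Finset.exists_of_ssubset <|
        (Finset.subset_of_image_subset_union_image hinj hIJ hS hN hsub).ssubset_of_ne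
          (Ne.symm hSN)
      have hs : ι s ∈ (S ∪ S.image ι) \ N.image ι := by
        refine Finset.mem_sdiff.mpr ⟨Finset.mem_union_right _ (Finset.mem_image_of_mem ι hsS), ?_⟩
        intro h
        obtain ⟨n, hn, hns⟩ := Finset.mem_image.mp h
        exact hsN (hinj (hN hn) (hS hsS) hns ▸ hn)
      have hsJ : ι s ∈ (I.image ι).toList :=
        Finset.mem_toList.mpr (Finset.mem_image_of_mem ι (hS hsS))
      rw [map_smul, emptyProj_single, if_neg fun h => h _ hsJ hs, smul_zero]
    · exact map_zero _

lemma exists_mem_A_apply_pairedVector {I : Finset L} {ι : L → L} (hinj : Set.InjOn ι I)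
    (hIJ : Disjoint I (I.image ι)) (w : Finset L → ℂ) {N T : Finset L} (hN : N ⊆ I)
    (hT : T ⊆ I.image ι) :
    ∃ b ∈ A (I.image ι), ∃ d : ℂ, d ≠ 0 ∧
      b (pairedVector I ι w) = (w N * d) • EuclideanSpace.single (N ∪ T) 1 := by
  set P := emptyProj (I.image ι).toList * annProd (N.image ι).toList
  have hP : P ∈ A (I.image ι) :=
    mul_mem (emptyProj_mem_A fun j hj => Finset.mem_toList.mp hj)
      (annProd_mem_A fun j hj => Finset.image_subset_image hN (Finset.mem_toList.mp hj))
  obtain ⟨c, hc, hPN⟩ := emptyProj_mul_annProd_single hinj hIJ hN hN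
  obtain ⟨c', hc', hcre⟩ := creProd_single T.nodup_toList (S := N) fun j hj hjN =>
    Finset.disjoint_left.mp hIJ (hN hjN) (hT (Finset.mem_toList.mp hj))
  refine ⟨creProd T.toList * P,
    mul_mem (creProd_mem_A fun j hj => hT (Finset.mem_toList.mp hj)) hP,
    c' * c, mul_ne_zero hc' hc, ?_⟩
  rw [pairedVector, map_sum, Finset.sum_eq_single N (fun S hS hSN => ?_)
    (fun h => absurd (Finset.mem_powerset.mpr hN) h), map_smul, mul_apply_eq_comp, hPN,
    if_pos rfl, map_smul, hcre, Finset.toList_toFinset, smul_smul, smul_smul, mul_comm c' c,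
    mul_assoc]
  obtain ⟨_, _, hPS⟩ := emptyProj_mul_annProd_single hinj hIJ (Finset.mem_powerset.mp hS) hN
  rw [map_smul, mul_apply_eq_comp, hPS, if_neg hSN, map_zero, smul_zero]

lemma apply_pairedVector_apply {I : Finset L} {ι : L → L} (hinj : Set.InjOn ι I)
    (hIJ : Disjoint I (I.image ι)) {g : FockSpace L →L[ℂ] FockSpace L}
    (hg : IsLocalMatrix I (opMatrix g)) (w : Finset L → ℂ) {N M : Finset L} (hN : N ⊆ I)
    (hM : M ⊆ I) :
    g (pairedVector I ι w) (N ∪ M.image ι) =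
      w M * (outerSign I (N ∪ M.image ι) * outerSign I (M ∪ M.image ι) * opMatrix g N M) := by
  have hJ : ∀ {X}, X ⊆ I → Disjoint (X.image ι) I := fun hX =>
    (hIJ.mono_right (Finset.image_subset_image hX)).symm
  have hterm : ∀ S ∈ I.powerset, g (w S • EuclideanSpace.single (S ∪ S.image ι) 1)
      (N ∪ M.image ι) = if S = M then w M *
        (outerSign I (N ∪ M.image ι) * outerSign I (M ∪ M.image ι) * opMatrix g N M) else 0 := by
    intro S hS'
    have hS := Finset.mem_powerset.mp hS'
    rw [map_smul, PiLp.smul_apply, ← opMatrix_apply, hg,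
      Finset.union_sdiff_eq_right_of_subset hN (hJ hM),
      Finset.union_sdiff_eq_right_of_subset hS (hJ hS),
      Finset.union_inter_eq_left_of_subset hN (hJ hM),
      Finset.union_inter_eq_left_of_subset hS (hJ hS)]
    by_cases hSM : S = M
    · simp [hSM]
    · have hSM' : M.image ι ≠ S.image ι := fun h =>
        hSM (Finset.image_injOn_powerset_of_injOn hinj hS' (Finset.mem_powerset.mpr hM) h.symm)
      simp [hSM, hSM']
  rw [pairedVector, map_sum, WithLp.ofLp_sum, Finset.sum_apply, Finset.sum_congr rfl hterm,
    Finset.sum_ite_eq', if_pos (Finset.mem_powerset.mpr hM)]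

lemma adjoint_apply_eq_zero_of_inner_eq_zero {n : Type*} [Fintype n] [DecidableEq n]
    {a b : EuclideanSpace ℂ n →L[ℂ] EuclideanSpace ℂ n} {Φ : EuclideanSpace ℂ n} {d : ℂ} {i : n}
    (h : ⟪Φ, (a * b) Φ⟫_ℂ = 0) (hb : b Φ = d • EuclideanSpace.single i 1) (hd : d ≠ 0) :
    adjoint a Φ i = 0 := by
  rw [mul_apply_eq_comp, ← adjoint_inner_left, hb, inner_smul_right,
    EuclideanSpace.inner_single_right, one_mul] at h
  simpa [hd] using h

theorem nondegenerate_right_general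
    {L : Type} [Fintype L] [LinearOrder L]
    (I J : Finset L) (ι : L → L)
    (hinj : Set.InjOn ι (I : Set L)) (himg : I.image ι = J) (hIJ : Disjoint I J)
    (D : Finset L → List L) (hD : IsEnum D)
    (p : Finset L → ℝ)
    (hppos : ∀ S ∈ I.powerset, 0 < p S)
    (a : FockSpace L →L[ℂ] FockSpace L) (ha : a ∈ A I)
    (h : ∀ b ∈ A (I.image ι), phi D p I ι (a * b) = 0) :
    a = 0 := by
  subst himg
  obtain ⟨w, hw, hΦ⟩ := Phi_eq_pairedVector hinj hIJ hD hppos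
  have hg : IsLocalMatrix I (opMatrix (adjoint a)) :=
    isLocalMatrix_opMatrix_of_mem_A (by simpa [star_eq_adjoint] using star_mem ha)
  have hgΦ : ∀ N ⊆ I, ∀ M ⊆ I, adjoint a (pairedVector I ι w) (N ∪ M.image ι) = 0 := by
    intro N hN M hM
    obtain ⟨b, hb, d, hd, hbΦ⟩ :=
      exists_mem_A_apply_pairedVector hinj hIJ w hN (Finset.image_subset_image hM)
    rw [← hΦ] at hbΦ ⊢
    exact adjoint_apply_eq_zero_of_inner_eq_zero (h b hb) hbΦ
      (mul_ne_zero (hw N (Finset.mem_powerset.mpr hN)) hd)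
  have hmat : opMatrix (adjoint a) = 0 := hg.eq_zero fun N hN M hM => by
    have := hgΦ N hN M hM
    rw [apply_pairedVector_apply hinj hIJ hg w hN hM] at this
    simpa [hw M (Finset.mem_powerset.mpr hM), outerSign_ne_zero] using this
  rw [← adjoint_adjoint a, (map_eq_zero_iff _ opMatrix.injective).mp hmat, map_zero]

/-- Proposition, part (ii). Assume `p_M > 0` for all `M ∈ D_I`.
If `a ∈ A(I)` satisfies `B_φ(a, b) = φ(ab) = 0` for all `b ∈ A(ι(I))`, then `a = 0`. -/
theorem nondegenerate_right
    {L : Type} [Fintype L] [LinearOrder L]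
    (I J : Finset L) (ι : L → L)
    (hinj : Set.InjOn ι (I : Set L)) (himg : I.image ι = J) (hIJ : Disjoint I J)
    (D : Finset L → List L) (hD : IsEnum D)
    (p : Finset L → ℝ)
    (hppos : ∀ S ∈ I.powerset, 0 < p S) (hp1 : ∑ S ∈ I.powerset, p S = 1)
    (a : FockSpace L →L[ℂ] FockSpace L) (ha : a ∈ A I)
    (h : ∀ b ∈ A (I.image ι), phi D p I ι (a * b) = 0) :
    a = 0 :=
  nondegenerate_right_general I J ι hinj himg hIJ D hD p hppos a ha h

end Fermion
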